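/- arXiv:2211.15991 — 2 statements merged into one kernel-verified Lean document; each statement's English description precedes it below -/
import Mathlib

section
/- Let 0 ≤ m < s < M, α > 0, x_0 ∈ [0,π], and let f ∈ 𝔉(m,M,s). Set l = π(s−m)/(M−m) and l⁻ = π−l. Then η_α(x_0)·M − (M−m)·ν_α(x_0,l⁻) ≤ u_f(x_0). -/
open MeasureTheory Real Set Filter

set_option maxHeartbeats 1000000

noncomputable def cA (α : ℝ) : ℝ := α / (1 + α * π)

noncomputable def robinG (α x y : ℝ) : ℝ :=
  -(1/2) * cA α * x * y - (1/2) * |x - y| + 1 / (2 * cA α)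

/-- Solution of the Robin problem with heat source `f`. -/
noncomputable def robinSol (α : ℝ) (f : ℝ → ℝ) (x : ℝ) : ℝ :=
  ∫ y in (-π)..π, robinG α x y * f y

/-- The class 𝔉(m,M,s) of heat sources. -/
def memF (m M s : ℝ) (f : ℝ → ℝ) : Prop :=
  MeasureTheory.IntegrableOn f (Set.Icc (-π) π) MeasureTheory.volume ∧
  (∀ᵐ x ∂(MeasureTheory.volume.restrict (Set.Icc (-π) π)), m ≤ f x ∧ f x ≤ M) ∧
  (∫ x in (-π)..π, f x) = 2 * π * s

/-- Temperature gap (oscillation) over `[-π, π]`. -/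
noncomputable def osc (u : ℝ → ℝ) : ℝ :=
  sSup (u '' Set.Icc (-π) π) - sInf (u '' Set.Icc (-π) π)

noncomputable def eta (α x : ℝ) : ℝ := -x^2/2 + π/α + π^2/2

noncomputable def nu (α x l : ℝ) : ℝ :=
  if x * (1 - l * cA α) < π - l then
    (l / cA α) * (1 - l * cA α / 2) * (1 - x^2 * (cA α)^2)
  else
    (1/2) * (π - x)^2 + l * (1 - cA α * x) * (2 * π - l + 1/α)

lemma integral_affine' (A B p q : ℝ) :
    (∫ y in p..q, (A + B * y)) = A*(q-p) + B*(q^2-p^2)/2 := by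
  rw [intervalIntegral.integral_add (intervalIntegrable_const)
    ((intervalIntegral.intervalIntegrable_id).const_mul B)]
  rw [intervalIntegral.integral_const_mul, integral_id, intervalIntegral.integral_const]
  simp [smul_eq_mul]; ring

lemma onePlus_pos {α : ℝ} (hα : 0 < α) : (0:ℝ) < 1 + α * π := by
  nlinarith [pi_pos]

lemma cA_pos {α : ℝ} (hα : 0 < α) : 0 < cA α :=
  div_pos hα (onePlus_pos hα)

lemma cA_pi_lt {α : ℝ} (hα : 0 < α) : cA α * π < 1 := by
  rw [cA, div_mul_eq_mul_div, div_lt_one (onePlus_pos hα)]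
  linarith

lemma robinG_cont (α x : ℝ) : Continuous fun y => robinG α x y := by
  unfold robinG
  fun_prop

lemma eta_int {α : ℝ} (hα : 0 < α) {x0 : ℝ} (h0 : 0 ≤ x0) (hxπ : x0 ≤ π) :
    (∫ y in (-π)..π, robinG α x0 y) = eta α x0 := by
  have hπ := pi_pos
  have hc : 0 < cA α := cA_pos hα
  obtain ⟨c, hcdef⟩ : ∃ c, c = cA α := ⟨_, rfl⟩
  have h1 : (∫ y in (-π)..x0, robinG α x0 y)
      = (1/(2*c) - x0/2)*(x0-(-π)) + ((1-c*x0)/2)*(x0^2-(-π)^2)/2 := by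
    rw [show (∫ y in (-π)..x0, robinG α x0 y)
        = ∫ y in (-π)..x0, ((1/(2*c) - x0/2) + ((1-c*x0)/2) * y) from
      intervalIntegral.integral_congr ?_, integral_affine']
    intro y hy
    rw [uIcc_of_le (by linarith)] at hy
    simp only [robinG, ← hcdef]
    rw [abs_of_nonneg (by linarith [hy.2])]
    ring
  have h2 : (∫ y in x0..π, robinG α x0 y)
      = (1/(2*c) + x0/2)*(π-x0) + (-((1+c*x0)/2))*(π^2-x0^2)/2 := by
    rw [show (∫ y in x0..π, robinG α x0 y)
        = ∫ y in x0..π, ((1/(2*c) + x0/2) + (-((1+c*x0)/2)) * y) from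
      intervalIntegral.integral_congr ?_, integral_affine']
    intro y hy
    rw [uIcc_of_le (by linarith)] at hy
    simp only [robinG, ← hcdef]
    rw [abs_of_nonpos (by linarith [hy.1])]
    ring
  rw [← intervalIntegral.integral_add_adjacent_intervals (b := x0)
      ((robinG_cont α x0).intervalIntegrable _ _) ((robinG_cont α x0).intervalIntegrable _ _),
    h1, h2]
  unfold eta
  rw [hcdef, cA]
  have hd : (1:ℝ) + α*π ≠ 0 := (onePlus_pos hα).ne'
  field_simp
  ring

/-- Theorem 2 (left inequality): lower bound for the temperature at `x₀`. -/
theorem temp_lower_bound (m M s α x0 : ℝ) (hm : 0 ≤ m) (hms : m < s) (hsM : s < M)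
    (hα : 0 < α) (hx0 : x0 ∈ Set.Icc 0 π) (f : ℝ → ℝ) (hf : memF m M s f) :
    eta α x0 * M - (M - m) * nu α x0 (π - π * (s - m) / (M - m)) ≤ robinSol α f x0 := by
  obtain ⟨hx00, hx0π⟩ := hx0
  obtain ⟨hfi, hfb, hfs⟩ := hf
  have hπ := pi_pos
  have hMm : (0:ℝ) < M - m := by linarith
  have hc : 0 < cA α := cA_pos hα
  have hcπ : cA α * π < 1 := cA_pi_lt hα
  obtain ⟨c, hcdef⟩ : ∃ c, c = cA α := ⟨_, rfl⟩
  have hcx : c * x0 < 1 := by nlinarith [mul_le_mul_of_nonneg_left hx0π hc.le]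
  obtain ⟨l, hldef⟩ : ∃ l, l = π - π * (s - m) / (M - m) := ⟨_, rfl⟩
  rw [← hldef]
  have hlM : l * (M - m) = π * (M - s) := by
    rw [hldef]; field_simp; ring
  have hl0 : 0 < l := by nlinarith [mul_pos hπ (show (0:ℝ) < M - s by linarith)]
  have hlπ : l < π := by nlinarith
  have hlc : l * c < 1 := by nlinarith [mul_lt_mul_of_pos_right hlπ hc]
  have hab : (-π) ≤ π := by linarith
  have hGc : Continuous fun y => robinG α x0 y := robinG_cont α x0
  have hfI : IntervalIntegrable f volume (-π) π := by
    apply MeasureTheory.IntegrableOn.intervalIntegrable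
    rwa [uIcc_of_le hab]
  -- Key reduction via bathtub-type bound with threshold t
  have key : ∀ t : ℝ,
      eta α x0 * M - (M - m) * (2*l*t + ∫ y in (-π)..π, max (robinG α x0 y - t) 0)
        ≤ robinSol α f x0 := by
    intro t
    have hmxc : Continuous fun y => max (robinG α x0 y - t) 0 :=
      (hGc.sub continuous_const).max continuous_const
    have hGfI : IntervalIntegrable (fun y => robinG α x0 y * f y) volume (-π) π :=
      hfI.continuousOn_mul hGc.continuousOn
    have hgI : IntervalIntegrable (fun y => M - f y) volume (-π) π :=
      intervalIntegrable_const.sub hfI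
    have hφgI : IntervalIntegrable
        (fun y => (t + max (robinG α x0 y - t) 0) * (M - f y)) volume (-π) π :=
      hgI.continuousOn_mul (continuous_const.add hmxc).continuousOn
    have hmxgI : IntervalIntegrable
        (fun y => max (robinG α x0 y - t) 0 * (M - f y)) volume (-π) π :=
      hgI.continuousOn_mul hmxc.continuousOn
    have hGgI : IntervalIntegrable (fun y => robinG α x0 y * (M - f y)) volume (-π) π :=
      hgI.continuousOn_mul hGc.continuousOn
    have hsplit : (∫ y in (-π)..π, robinG α x0 y * f y)
        = eta α x0 * M - ∫ y in (-π)..π, robinG α x0 y * (M - f y) := by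
      rw [eq_sub_iff_add_eq, ← intervalIntegral.integral_add hGfI hGgI,
        show (∫ y in (-π)..π, (robinG α x0 y * f y + robinG α x0 y * (M - f y)))
          = ∫ y in (-π)..π, robinG α x0 y * M from
          intervalIntegral.integral_congr fun y _ => by ring,
        intervalIntegral.integral_mul_const, eta_int hα hx00 hx0π]
    have step2 : (∫ y in (-π)..π, robinG α x0 y * (M - f y))
        ≤ ∫ y in (-π)..π, (t + max (robinG α x0 y - t) 0) * (M - f y) := by
      apply intervalIntegral.integral_mono_ae_restrict hab hGgI hφgI
      filter_upwards [hfb] with y hy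
      have h1 : robinG α x0 y ≤ t + max (robinG α x0 y - t) 0 := by
        have := le_max_left (robinG α x0 y - t) 0; linarith
      exact mul_le_mul_of_nonneg_right h1 (by linarith [hy.2])
    have step3 : (∫ y in (-π)..π, (t + max (robinG α x0 y - t) 0) * (M - f y))
        = t * (2*π*M - 2*π*s) + ∫ y in (-π)..π, max (robinG α x0 y - t) 0 * (M - f y) := by
      rw [show (∫ y in (-π)..π, (t + max (robinG α x0 y - t) 0) * (M - f y))
          = ∫ y in (-π)..π, (t * (M - f y) + max (robinG α x0 y - t) 0 * (M - f y)) from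
          intervalIntegral.integral_congr fun y _ => by ring,
        intervalIntegral.integral_add (hgI.const_mul t) hmxgI,
        intervalIntegral.integral_const_mul,
        intervalIntegral.integral_sub intervalIntegrable_const hfI, hfs,
        intervalIntegral.integral_const]
      simp only [smul_eq_mul]
      ring
    have step4 : (∫ y in (-π)..π, max (robinG α x0 y - t) 0 * (M - f y))
        ≤ (M - m) * ∫ y in (-π)..π, max (robinG α x0 y - t) 0 := by
      rw [← intervalIntegral.integral_const_mul]
      apply intervalIntegral.integral_mono_ae_restrict hab hmxgI
        ((hmxc.intervalIntegrable _ _).const_mul _)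
      filter_upwards [hfb] with y hy
      have h3 : (0:ℝ) ≤ max (robinG α x0 y - t) 0 := le_max_right _ 0
      calc max (robinG α x0 y - t) 0 * (M - f y)
          ≤ max (robinG α x0 y - t) 0 * (M - m) :=
            mul_le_mul_of_nonneg_left (by linarith [hy.1]) h3
        _ = (M - m) * max (robinG α x0 y - t) 0 := mul_comm _ _
    have harith : t * (2*π*M - 2*π*s) = 2*l*t*(M-m) := by
      linear_combination (-2*t) * hlM
    have hdist : (M - m) * (2*l*t + ∫ y in (-π)..π, max (robinG α x0 y - t) 0)
        = 2*l*t*(M-m) + (M-m) * ∫ y in (-π)..π, max (robinG α x0 y - t) 0 := by ring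
    unfold robinSol
    rw [hsplit]
    linarith [step2, step3, step4]
  by_cases hcond : x0 * (1 - l * c) < π - l
  · -- interior level set
    obtain ⟨a, hadef⟩ : ∃ a, a = x0 - l*(1 + c*x0) := ⟨_, rfl⟩
    obtain ⟨b, hbdef⟩ : ∃ b, b = x0 + l*(1 - c*x0) := ⟨_, rfl⟩
    obtain ⟨t, htdef⟩ : ∃ t, t = 1/(2*c) - c*x0^2/2 - l*(1 - c^2*x0^2)/2 := ⟨_, rfl⟩
    have hs1 : (0:ℝ) < 1 - c*x0 := by linarith
    have haπ : -π ≤ a := by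
      nlinarith [mul_nonneg hx00 (show (0:ℝ) ≤ 1 - l*c by linarith)]
    have hax : a ≤ x0 := by
      nlinarith [mul_nonneg hl0.le (mul_nonneg hc.le hx00)]
    have hxb : x0 ≤ b := by
      nlinarith [mul_nonneg hl0.le (show (0:ℝ) ≤ 1 - c*x0 by linarith)]
    have hbπ : b ≤ π := by nlinarith
    have hGl : ∀ y, y ≤ x0 → robinG α x0 y - t = (1 - c*x0)/2 * (y - a) := by
      intro y hy
      simp only [robinG, ← hcdef, htdef, hadef]
      rw [abs_of_nonneg (by linarith)]
      ring
    have hGr : ∀ y, x0 ≤ y → robinG α x0 y - t = (1 + c*x0)/2 * (b - y) := by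
      intro y hy
      simp only [robinG, ← hcdef, htdef, hbdef]
      rw [abs_of_nonpos (by linarith)]
      ring
    have hii : ∀ p q : ℝ, IntervalIntegrable
        (fun y => max (robinG α x0 y - t) 0) volume p q := fun p q =>
      (((robinG_cont α x0).sub continuous_const).max continuous_const).intervalIntegrable p q
    have d1 : (∫ y in (-π)..a, max (robinG α x0 y - t) 0) = 0 := by
      rw [intervalIntegral.integral_congr (g := fun _ => (0:ℝ)) ?_]
      · simp
      · intro y hy
        rw [uIcc_of_le haπ] at hy
        have h := hGl y (le_trans hy.2 hax)
        simp only
        rw [max_eq_right (by rw [h]; nlinarith [hy.2])]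
    have d2 : (∫ y in a..x0, max (robinG α x0 y - t) 0) = (1-c*x0)/2*(x0-a)^2/2 := by
      rw [show (∫ y in a..x0, max (robinG α x0 y - t) 0)
          = ∫ y in a..x0, ((-((1-c*x0)/2 * a)) + ((1-c*x0)/2) * y) from
        intervalIntegral.integral_congr ?_, integral_affine']
      · ring
      · intro y hy
        rw [uIcc_of_le hax] at hy
        simp only
        rw [max_eq_left (by rw [hGl y hy.2]; nlinarith [hy.1]), hGl y hy.2]
        ring
    have d3 : (∫ y in x0..b, max (robinG α x0 y - t) 0) = (1+c*x0)/2*(b-x0)^2/2 := by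
      rw [show (∫ y in x0..b, max (robinG α x0 y - t) 0)
          = ∫ y in x0..b, (((1+c*x0)/2 * b) + (-((1+c*x0)/2)) * y) from
        intervalIntegral.integral_congr ?_, integral_affine']
      · ring
      · intro y hy
        rw [uIcc_of_le hxb] at hy
        have hcx0 : (0:ℝ) ≤ 1 + c*x0 := by nlinarith [mul_nonneg hc.le hx00]
        simp only
        rw [max_eq_left (by rw [hGr y hy.1]; nlinarith [hy.2]), hGr y hy.1]
        ring
    have d4 : (∫ y in b..π, max (robinG α x0 y - t) 0) = 0 := by
      rw [intervalIntegral.integral_congr (g := fun _ => (0:ℝ)) ?_]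
      · simp
      · intro y hy
        rw [uIcc_of_le hbπ] at hy
        have h := hGr y (le_trans hxb hy.1)
        simp only
        have hcx0 : (0:ℝ) ≤ 1 + c*x0 := by nlinarith [mul_nonneg hc.le hx00]
        rw [max_eq_right (by rw [h]; nlinarith [hy.1])]
    have hQ : (∫ y in (-π)..π, max (robinG α x0 y - t) 0)
        = (1-c*x0)/2*(x0-a)^2/2 + (1+c*x0)/2*(b-x0)^2/2 := by
      rw [← intervalIntegral.integral_add_adjacent_intervals (b := a) (hii _ _) (hii _ _),
        ← intervalIntegral.integral_add_adjacent_intervals (a := a) (b := x0) (hii _ _) (hii _ _),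
        ← intervalIntegral.integral_add_adjacent_intervals (a := x0) (b := b) (hii _ _) (hii _ _),
        d1, d2, d3, d4]
      ring
    have hcond' : x0 * (1 - l * cA α) < π - l := by rw [← hcdef]; exact hcond
    have hveq : nu α x0 l
        = 2*l*t + ((1-c*x0)/2*(x0-a)^2/2 + (1+c*x0)/2*(b-x0)^2/2) := by
      have hcne : c ≠ 0 := by rw [hcdef]; exact hc.ne'
      unfold nu
      rw [if_pos hcond', ← hcdef, htdef, hadef, hbdef]
      field_simp
      ring
    have h := key t
    rw [hQ] at h
    calc eta α x0 * M - (M - m) * nu α x0 l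
        = eta α x0 * M - (M - m) * (2*l*t
            + ((1-c*x0)/2*(x0-a)^2/2 + (1+c*x0)/2*(b-x0)^2/2)) := by rw [hveq]
      _ ≤ robinSol α f x0 := h
  · -- level set touching the right endpoint
    have hcond2 : π - l ≤ x0 * (1 - l * c) := not_lt.1 hcond
    obtain ⟨a, hadef⟩ : ∃ a, a = π - 2*l := ⟨_, rfl⟩
    obtain ⟨t, htdef⟩ : ∃ t, t = 1/(2*c) - c*x0^2/2 - (1-c*x0)/2*(x0 - a) := ⟨_, rfl⟩
    have hs1 : (0:ℝ) < 1 - c*x0 := by linarith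
    have haπ : -π ≤ a := by rw [hadef]; linarith
    have hax : a ≤ x0 := by
      nlinarith [mul_nonneg (mul_nonneg hl0.le hc.le) hx00]
    have hGl : ∀ y, y ≤ x0 → robinG α x0 y - t = (1 - c*x0)/2 * (y - a) := by
      intro y hy
      simp only [robinG, ← hcdef, htdef, hadef]
      rw [abs_of_nonneg (by linarith)]
      ring
    have hGr : ∀ y, x0 ≤ y →
        robinG α x0 y - t = (1-c*x0)/2*(x0-a) - (1+c*x0)/2*(y-x0) := by
      intro y hy
      simp only [robinG, ← hcdef, htdef, hadef]
      rw [abs_of_nonpos (by linarith)]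
      ring
    have hii : ∀ p q : ℝ, IntervalIntegrable
        (fun y => max (robinG α x0 y - t) 0) volume p q := fun p q =>
      (((robinG_cont α x0).sub continuous_const).max continuous_const).intervalIntegrable p q
    have d1 : (∫ y in (-π)..a, max (robinG α x0 y - t) 0) = 0 := by
      rw [intervalIntegral.integral_congr (g := fun _ => (0:ℝ)) ?_]
      · simp
      · intro y hy
        rw [uIcc_of_le haπ] at hy
        have h := hGl y (le_trans hy.2 hax)
        simp only
        rw [max_eq_right (by rw [h]; nlinarith [hy.2])]
    have d2 : (∫ y in a..x0, max (robinG α x0 y - t) 0) = (1-c*x0)/2*(x0-a)^2/2 := by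
      rw [show (∫ y in a..x0, max (robinG α x0 y - t) 0)
          = ∫ y in a..x0, ((-((1-c*x0)/2 * a)) + ((1-c*x0)/2) * y) from
        intervalIntegral.integral_congr ?_, integral_affine']
      · ring
      · intro y hy
        rw [uIcc_of_le hax] at hy
        simp only
        rw [max_eq_left (by rw [hGl y hy.2]; nlinarith [hy.1]), hGl y hy.2]
        ring
    have d3 : (∫ y in x0..π, max (robinG α x0 y - t) 0)
        = (1-c*x0)/2*(x0-a)*(π-x0) - (1+c*x0)/2*(π-x0)^2/2 := by
      rw [show (∫ y in x0..π, max (robinG α x0 y - t) 0)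
          = ∫ y in x0..π, (((1-c*x0)/2*(x0-a) + (1+c*x0)/2*x0) + (-((1+c*x0)/2)) * y) from
        intervalIntegral.integral_congr ?_, integral_affine']
      · ring
      · intro y hy
        rw [uIcc_of_le hx0π] at hy
        have hcx0 : (0:ℝ) ≤ 1 + c*x0 := by nlinarith [mul_nonneg hc.le hx00]
        have hge : 0 ≤ (1-c*x0)/2*(x0-a) - (1+c*x0)/2*(y-x0) := by
          rw [hadef]
          nlinarith [mul_nonneg hcx0 (show (0:ℝ) ≤ π - y by linarith [hy.2])]
        simp only
        rw [max_eq_left (by rw [hGr y hy.1]; exact hge), hGr y hy.1]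
        ring
    have hQ : (∫ y in (-π)..π, max (robinG α x0 y - t) 0)
        = (1-c*x0)/2*(x0-a)^2/2
          + ((1-c*x0)/2*(x0-a)*(π-x0) - (1+c*x0)/2*(π-x0)^2/2) := by
      rw [← intervalIntegral.integral_add_adjacent_intervals (b := a) (hii _ _) (hii _ _),
        ← intervalIntegral.integral_add_adjacent_intervals (a := a) (b := x0) (hii _ _) (hii _ _),
        d1, d2, d3]
      ring
    have hcond' : ¬ (x0 * (1 - l * cA α) < π - l) := by rw [← hcdef]; exact hcond
    have h1aπ : (1:ℝ) + α*π ≠ 0 := (onePlus_pos hα).ne'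
    have hveq : nu α x0 l
        - (2*l*t + ((1-c*x0)/2*(x0-a)^2/2
          + ((1-c*x0)/2*(x0-a)*(π-x0) - (1+c*x0)/2*(π-x0)^2/2)))
        = (π - x0)^2 := by
      unfold nu
      rw [if_neg hcond', htdef, hadef, hcdef, cA]
      field_simp
      ring
    have h := key t
    rw [hQ] at h
    have hle : 2*l*t + ((1-c*x0)/2*(x0-a)^2/2
          + ((1-c*x0)/2*(x0-a)*(π-x0) - (1+c*x0)/2*(π-x0)^2/2)) ≤ nu α x0 l := by
      linarith [hveq, sq_nonneg (π - x0)]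
    have hmul := mul_le_mul_of_nonneg_left hle hMm.le
    linarith [h, hmul]
end

section
/- Let 0 ≤ m < s < M and α > 0. Suppose f_n ∈ 𝔉(m,M,s) for n = 1,2,… and f_n → f almost everywhere on [−π,π] for some f ∈ L¹[−π,π]. Then u_{f_n} → u_f uniformly on [−π,π], and there is a subsequence (n_k) such that osc(u_{f_{n_k}}) → osc(u_f) as k → ∞. -/
open MeasureTheory Real Set Filter

/- ### Auxiliary lemmas -/

lemma negPi_le_pi : (-π : ℝ) ≤ π := by linarith [Real.pi_pos]

/-- A uniform bound for the Green's function. -/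
noncomputable def Cb (α : ℝ) : ℝ := (1/2) * cA α * π^2 + π + 1 / (2 * cA α)

lemma Cb_pos {α : ℝ} (hα : 0 < α) : 0 < Cb α := by
  have hc := cA_pos hα
  have hπ := Real.pi_pos
  unfold Cb
  positivity

lemma G_cont (α x : ℝ) : Continuous (fun y => robinG α x y) := by
  unfold robinG
  fun_prop

lemma G_bound {α : ℝ} (hα : 0 < α) {x y : ℝ} (hx : x ∈ Icc (-π) π)
    (hy : y ∈ Icc (-π) π) : |robinG α x y| ≤ Cb α := by
  have hc := cA_pos hα
  have hπ := Real.pi_pos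
  have hx' : |x| ≤ π := abs_le.mpr ⟨hx.1, hx.2⟩
  have hy' : |y| ≤ π := abs_le.mpr ⟨hy.1, hy.2⟩
  have hxy : |x| * |y| ≤ π ^ 2 := by nlinarith [abs_nonneg x, abs_nonneg y]
  have h1 : |(-(1/2) * cA α * x * y)| ≤ (1/2) * cA α * π^2 := by
    rw [abs_mul, abs_mul, abs_mul, show |(-(1/2) : ℝ)| = 1/2 by norm_num, abs_of_pos hc]
    nlinarith [abs_nonneg x, abs_nonneg y]
  unfold robinG Cb
  set d := |x - y| with hd
  have hd0 : (0:ℝ) ≤ d := abs_nonneg _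
  have h2 : d ≤ 2 * π := by rw [hd]; linarith [abs_sub x y]
  have h3 : |(1/2 : ℝ) * d| = (1/2) * d := abs_of_nonneg (by positivity)
  have h5 : |(1 / (2 * cA α) : ℝ)| = 1 / (2 * cA α) := abs_of_pos (by positivity)
  have t1 : |(-(1/2) * cA α * x * y - (1/2) * d + 1 / (2 * cA α))| ≤
      |(-(1/2) * cA α * x * y)| + |(1/2 : ℝ) * d| + |(1 / (2 * cA α) : ℝ)| := by
    calc |(-(1/2) * cA α * x * y - (1/2) * d + 1 / (2 * cA α))|
        ≤ |(-(1/2) * cA α * x * y - (1/2) * d)| + |(1 / (2 * cA α) : ℝ)| := abs_add_le _ _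
      _ ≤ _ := by linarith [abs_sub (-(1/2) * cA α * x * y) ((1/2) * d)]
  rw [h3, h5] at t1
  linarith

lemma G_mul_intble {α : ℝ} (hα : 0 < α) {f : ℝ → ℝ}
    (hf : IntegrableOn f (Icc (-π) π) volume) {x : ℝ} (hx : x ∈ Icc (-π) π) :
    IntervalIntegrable (fun y => robinG α x y * f y) volume (-π) π := by
  rw [intervalIntegrable_iff_integrableOn_Ioc_of_le negPi_le_pi]
  have hf' : IntegrableOn f (Ioc (-π) π) volume := hf.mono_set Ioc_subset_Icc_self
  apply Integrable.mono' (g := fun y => Cb α * |f y|)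
  · exact (hf'.abs.const_mul (Cb α))
  · exact ((G_cont α x).aestronglyMeasurable).mul hf'.aestronglyMeasurable
  · rw [ae_restrict_iff' measurableSet_Ioc]
    filter_upwards with y hy
    rw [Real.norm_eq_abs, abs_mul]
    exact mul_le_mul_of_nonneg_right (G_bound hα hx (Ioc_subset_Icc_self hy)) (abs_nonneg _)

lemma f_ii {f : ℝ → ℝ} (hf : IntegrableOn f (Icc (-π) π) volume) :
    IntervalIntegrable f volume (-π) π := by
  rw [intervalIntegrable_iff_integrableOn_Ioc_of_le negPi_le_pi]
  exact hf.mono_set Ioc_subset_Icc_self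

lemma sol_bound {α : ℝ} (hα : 0 < α) {f : ℝ → ℝ}
    (hf : IntegrableOn f (Icc (-π) π) volume) {x : ℝ} (hx : x ∈ Icc (-π) π) :
    |robinSol α f x| ≤ Cb α * ∫ y in (-π)..π, |f y| := by
  have hint := G_mul_intble hα hf hx
  have h1 : |robinSol α f x| ≤ ∫ y in (-π)..π, |robinG α x y * f y| := by
    have h := intervalIntegral.norm_integral_le_integral_norm
      (f := fun y => robinG α x y * f y) (μ := volume) negPi_le_pi
    simp only [Real.norm_eq_abs] at h
    exact h
  have h2 : ∫ y in (-π)..π, |robinG α x y * f y| ≤ ∫ y in (-π)..π, Cb α * |f y| := by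
    apply intervalIntegral.integral_mono_on negPi_le_pi hint.abs
      ((f_ii hf).abs.const_mul _)
    intro y hy
    rw [abs_mul]
    exact mul_le_mul_of_nonneg_right (G_bound hα hx hy) (abs_nonneg _)
  calc |robinSol α f x| ≤ ∫ y in (-π)..π, Cb α * |f y| := le_trans h1 h2
    _ = Cb α * ∫ y in (-π)..π, |f y| := intervalIntegral.integral_const_mul _ _

lemma sol_diff_bound {α : ℝ} (hα : 0 < α) {f g : ℝ → ℝ}
    (hf : IntegrableOn f (Icc (-π) π) volume) (hg : IntegrableOn g (Icc (-π) π) volume)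
    {x : ℝ} (hx : x ∈ Icc (-π) π) :
    |robinSol α f x - robinSol α g x| ≤ Cb α * ∫ y in (-π)..π, |f y - g y| := by
  have hfg : IntegrableOn (fun y => f y - g y) (Icc (-π) π) volume := hf.sub hg
  have heq : robinSol α (fun y => f y - g y) x = robinSol α f x - robinSol α g x := by
    unfold robinSol
    have h0 : (fun y => robinG α x y * (f y - g y))
        = fun y => robinG α x y * f y - robinG α x y * g y := by
      funext y; ring
    rw [h0, intervalIntegral.integral_sub (G_mul_intble hα hf hx) (G_mul_intble hα hg hx)]
  rw [← heq]
  exact sol_bound hα hfg hx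

lemma osc_close (u v : ℝ → ℝ) (ε : ℝ)
    (hb : ∀ x ∈ Icc (-π) π, |u x - v x| ≤ ε)
    (huA : BddAbove (u '' Icc (-π) π)) (huB : BddBelow (u '' Icc (-π) π))
    (hvA : BddAbove (v '' Icc (-π) π)) (hvB : BddBelow (v '' Icc (-π) π)) :
    |osc u - osc v| ≤ 2 * ε := by
  have hπ := Real.pi_pos
  have hne : (Icc (-π : ℝ) π).Nonempty := ⟨0, ⟨by linarith, by linarith⟩⟩
  have h1 : sSup (u '' Icc (-π) π) ≤ sSup (v '' Icc (-π) π) + ε := by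
    apply csSup_le (hne.image u)
    rintro a ⟨x, hx, rfl⟩
    have h2 := le_csSup hvA (mem_image_of_mem v hx)
    have h3 := abs_le.mp (hb x hx)
    linarith [h3.2]
  have h1' : sSup (v '' Icc (-π) π) ≤ sSup (u '' Icc (-π) π) + ε := by
    apply csSup_le (hne.image v)
    rintro a ⟨x, hx, rfl⟩
    have h2 := le_csSup huA (mem_image_of_mem u hx)
    have h3 := abs_le.mp (hb x hx)
    linarith [h3.1]
  have h4 : sInf (v '' Icc (-π) π) - ε ≤ sInf (u '' Icc (-π) π) := by
    apply le_csInf (hne.image u)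
    rintro a ⟨x, hx, rfl⟩
    have h2 := csInf_le hvB (mem_image_of_mem v hx)
    have h3 := abs_le.mp (hb x hx)
    linarith [h3.1]
  have h4' : sInf (u '' Icc (-π) π) - ε ≤ sInf (v '' Icc (-π) π) := by
    apply le_csInf (hne.image v)
    rintro a ⟨x, hx, rfl⟩
    have h2 := csInf_le huB (mem_image_of_mem u hx)
    have h3 := abs_le.mp (hb x hx)
    linarith [h3.2]
  unfold osc
  rw [abs_le]
  constructor <;> linarith

/-- Lemma 4 (convergence lemma). -/
theorem convergence_lemma (m M s α : ℝ) (hm : 0 ≤ m) (hms : m < s) (hsM : s < M)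
    (hα : 0 < α) (f : ℝ → ℝ) (fn : ℕ → ℝ → ℝ)
    (hfn : ∀ n, memF m M s (fn n))
    (hfL1 : MeasureTheory.IntegrableOn f (Set.Icc (-π) π) MeasureTheory.volume)
    (hconv : ∀ᵐ x ∂(MeasureTheory.volume.restrict (Set.Icc (-π) π)),
      Filter.Tendsto (fun n => fn n x) Filter.atTop (nhds (f x))) :
    TendstoUniformlyOn (fun n => robinSol α (fn n)) (robinSol α f)
      Filter.atTop (Set.Icc (-π) π) ∧
    ∃ φ : ℕ → ℕ, StrictMono φ ∧
      Filter.Tendsto (fun k => osc (robinSol α (fn (φ k)))) Filter.atTop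
        (nhds (osc (robinSol α f))) := by
  have hπ := Real.pi_pos
  have hle : (-π : ℝ) ≤ π := by linarith
  have hCb := Cb_pos hα
  -- a.e. bounds on f
  have hfbd : ∀ᵐ x ∂(volume.restrict (Icc (-π) π)), m ≤ f x ∧ f x ≤ M := by
    have hall : ∀ᵐ x ∂(volume.restrict (Icc (-π) π)), ∀ n, m ≤ fn n x ∧ fn n x ≤ M :=
      ae_all_iff.mpr fun n => (hfn n).2.1
    filter_upwards [hall, hconv] with x hx hlim
    exact ⟨ge_of_tendsto' hlim fun n => (hx n).1, le_of_tendsto' hlim fun n => (hx n).2⟩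
  -- L¹ convergence of fn to f
  have hIconv : Tendsto (fun n => ∫ y in (-π)..π, |fn n y - f y|) atTop (nhds 0) := by
    have heq : ∀ n, (∫ y in (-π)..π, |fn n y - f y|)
        = ∫ y in Ioc (-π) π, |fn n y - f y| := fun n => intervalIntegral.integral_of_le hle
    have hf' : IntegrableOn f (Ioc (-π) π) volume := hfL1.mono_set Ioc_subset_Icc_self
    have hmeas : ∀ n, AEStronglyMeasurable (fun y => |fn n y - f y|)
        (volume.restrict (Ioc (-π) π)) := by
      intro n
      have := (((hfn n).1.mono_set Ioc_subset_Icc_self).aestronglyMeasurable.sub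
        hf'.aestronglyMeasurable).norm
      simpa [Real.norm_eq_abs] using this
    have hbint : Integrable (fun _ : ℝ => 2 * M) (volume.restrict (Ioc (-π) π)) :=
      integrable_const _
    have hbound : ∀ n, ∀ᵐ y ∂(volume.restrict (Ioc (-π) π)),
        ‖|fn n y - f y|‖ ≤ 2 * M := by
      intro n
      have hn := ae_restrict_of_ae_restrict_of_subset Ioc_subset_Icc_self ((hfn n).2.1)
      have hf2 := ae_restrict_of_ae_restrict_of_subset
        (Ioc_subset_Icc_self (a := (-π : ℝ)) (b := π)) hfbd
      filter_upwards [hn, hf2] with y hy hfy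
      rw [Real.norm_eq_abs, abs_abs, abs_le]
      constructor <;> [linarith [hy.1, hfy.2]; linarith [hy.2, hfy.1]]
    have hlim : ∀ᵐ y ∂(volume.restrict (Ioc (-π) π)),
        Tendsto (fun n => |fn n y - f y|) atTop (nhds 0) := by
      have hc := ae_restrict_of_ae_restrict_of_subset
        (Ioc_subset_Icc_self (a := (-π : ℝ)) (b := π)) hconv
      filter_upwards [hc] with y hy
      have := (hy.sub_const (f y)).abs
      simpa using this
    have key := tendsto_integral_of_dominated_convergence (μ := volume.restrict (Ioc (-π) π))
      (F := fun n y => |fn n y - f y|) (f := fun _ => (0 : ℝ)) (fun _ => 2 * M)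
      hmeas hbint hbound hlim
    simp only [integral_zero] at key
    simpa [heq] using key
  -- uniform bound on the difference
  have hdiff : ∀ n, ∀ x ∈ Icc (-π) π, |robinSol α f x - robinSol α (fn n) x|
      ≤ Cb α * ∫ y in (-π)..π, |fn n y - f y| := by
    intro n x hx
    have h1 := sol_diff_bound hα hfL1 (hfn n).1 hx
    have h2 : (∫ y in (-π)..π, |f y - fn n y|) = ∫ y in (-π)..π, |fn n y - f y| := by
      apply intervalIntegral.integral_congr
      intro y _
      exact abs_sub_comm _ _
    rwa [h2] at h1
  have hucv : Tendsto (fun n => Cb α * ∫ y in (-π)..π, |fn n y - f y|) atTop (nhds 0) := by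
    simpa using hIconv.const_mul (Cb α)
  -- uniform convergence
  have hUnif : TendstoUniformlyOn (fun n => robinSol α (fn n)) (robinSol α f)
      atTop (Icc (-π) π) := by
    rw [Metric.tendstoUniformlyOn_iff]
    intro ε hε
    filter_upwards [hucv.eventually_lt_const hε] with n hn x hx
    rw [Real.dist_eq]
    exact lt_of_le_of_lt (hdiff n x hx) hn
  refine ⟨hUnif, id, strictMono_id, ?_⟩
  -- boundedness facts
  have bddA : ∀ (g : ℝ → ℝ), IntegrableOn g (Icc (-π) π) volume →
      BddAbove ((robinSol α g) '' Icc (-π) π) ∧ BddBelow ((robinSol α g) '' Icc (-π) π) := by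
    intro g hg
    constructor
    · refine ⟨Cb α * ∫ y in (-π)..π, |g y|, ?_⟩
      rintro a ⟨x, hx, rfl⟩
      exact (abs_le.mp (sol_bound hα hg hx)).2
    · refine ⟨-(Cb α * ∫ y in (-π)..π, |g y|), ?_⟩
      rintro a ⟨x, hx, rfl⟩
      exact (abs_le.mp (sol_bound hα hg hx)).1
  have key : ∀ n, |osc (robinSol α (fn n)) - osc (robinSol α f)|
      ≤ 2 * (Cb α * ∫ y in (-π)..π, |fn n y - f y|) := by
    intro n
    apply osc_close
    · intro x hx
      rw [abs_sub_comm]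
      exact hdiff n x hx
    · exact (bddA _ (hfn n).1).1
    · exact (bddA _ (hfn n).1).2
    · exact (bddA _ hfL1).1
    · exact (bddA _ hfL1).2
  have h2 : Tendsto (fun n => 2 * (Cb α * ∫ y in (-π)..π, |fn n y - f y|)) atTop (nhds 0) := by
    simpa using hucv.const_mul 2
  simp only [id_eq]
  rw [tendsto_iff_dist_tendsto_zero]
  simp only [Real.dist_eq]
  exact squeeze_zero (fun n => abs_nonneg _) key h2
end
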